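/- arXiv:2108.01345 — 4 statements merged into one kernel-verified Lean document; each statement's English description precedes it below -/
import Mathlib

section
/- Assume (A1). For every v : [n₀] → ℂ² one has ‖𝒦v‖² + ‖P₀v(0)‖²_{ℂ²} + ‖Q_{n₀}v(n₀)‖²_{ℂ²} = ‖v‖², where ‖·‖ is the ℓ²-norm on ℂ^{2(n₀+1)}. Consequently the operator norm of 𝒦 is at most 1. -/
open Complex Matrix

noncomputable section

/-- states: `ℂ²` -/
abbrev C2 : Type := Fin 2 → ℂ

/-- `P n = |L⟩⟨L| U n` -/
def Pmat (U : ℤ → Matrix (Fin 2) (Fin 2) ℂ) (n : ℤ) : Matrix (Fin 2) (Fin 2) ℂ :=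
  Matrix.of fun i j => if i = 0 then U n 0 j else 0

/-- `Q n = |R⟩⟨R| U n` -/
def Qmat (U : ℤ → Matrix (Fin 2) (Fin 2) ℂ) (n : ℤ) : Matrix (Fin 2) (Fin 2) ℂ :=
  Matrix.of fun i j => if i = 1 then U n 1 j else 0

/-- the time evolution operator `𝒰`: `(𝒰ψ)(n) = P_{n+1}ψ(n+1) + Q_{n-1}ψ(n-1)` -/
def QWop (U : ℤ → Matrix (Fin 2) (Fin 2) ℂ) (ψ : ℤ → C2) : ℤ → C2 :=
  fun n => (Pmat U (n + 1)).mulVec (ψ (n + 1)) + (Qmat U (n - 1)).mulVec (ψ (n - 1))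

/-- all local coins are unitary -/
def CoinsUnitary (U : ℤ → Matrix (Fin 2) (Fin 2) ℂ) : Prop :=
  ∀ n : ℤ, U n ∈ Matrix.unitaryGroup (Fin 2) ℂ

/-- Assumption (A1): `U n = I₂` outside `[n₀] = {0,…,n₀}` -/
def A1 (n0 : ℕ) (U : ℤ → Matrix (Fin 2) (Fin 2) ℂ) : Prop :=
  ∀ n : ℤ, n < 0 ∨ (n0 : ℤ) < n → U n = 1

/-- Assumption (A2): `a n ≠ 0` for all `n` -/
def A2 (U : ℤ → Matrix (Fin 2) (Fin 2) ℂ) : Prop :=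
  ∀ n : ℤ, U n 0 0 ≠ 0

/-- the restriction `𝒦` of `𝒰` to `ℓ²([n₀];ℂ²) ≅ ℂ^{2(n₀+1)}`, as a matrix:
`(𝒦v)(n) = P_{n+1}v(n+1) + Q_{n-1}v(n-1)` with the convention that out-of-range terms vanish. -/
def Kmat (n0 : ℕ) (U : ℤ → Matrix (Fin 2) (Fin 2) ℂ) :
    Matrix (Fin (n0 + 1) × Fin 2) (Fin (n0 + 1) × Fin 2) ℂ :=
  Matrix.of fun p q =>
    (if p.2 = 0 ∧ (q.1 : ℕ) = (p.1 : ℕ) + 1 then U (((p.1 : ℕ) : ℤ) + 1) 0 q.2 else 0) +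
    (if p.2 = 1 ∧ (q.1 : ℕ) + 1 = (p.1 : ℕ) then U ((q.1 : ℕ) : ℤ) 1 q.2 else 0)

/-- `μ` is an eigenvalue of `𝒦` -/
def HasEig (n0 : ℕ) (U : ℤ → Matrix (Fin 2) (Fin 2) ℂ) (μ : ℂ) : Prop :=
  ∃ v : Fin (n0 + 1) × Fin 2 → ℂ, v ≠ 0 ∧ (Kmat n0 U).mulVec v = μ • v

/-- the algebraic multiplicity of `μ` as an eigenvalue of `𝒦`:
`dim ker (𝒦 - μI)^{2(n₀+1)}` -/
def algMult (n0 : ℕ) (U : ℤ → Matrix (Fin 2) (Fin 2) ℂ) (μ : ℂ) : ℕ :=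
  Module.finrank ℂ
    (LinearMap.ker (Matrix.mulVecLin ((Kmat n0 U - μ • 1) ^ (2 * (n0 + 1)))))

/-- `ψ` solves the generalized eigenvalue equation `𝒰ψ = μψ` (pointwise on `ℤ`) -/
def IsSol (U : ℤ → Matrix (Fin 2) (Fin 2) ℂ) (μ : ℂ) (ψ : ℤ → C2) : Prop :=
  ∀ n : ℤ, QWop U ψ n = μ • ψ n

/-- the local transfer matrix `T n ξ` -/
def Tmat (U : ℤ → Matrix (Fin 2) (Fin 2) ℂ) (ξ : ℂ) (n : ℤ) : Matrix (Fin 2) (Fin 2) ℂ :=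
  !![Complex.exp (Complex.I * ξ) / (starRingEnd ℂ) (U n 0 0),
      -((starRingEnd ℂ) (U n 1 0)) / (starRingEnd ℂ) (U n 0 0);
    -(U n 1 0) / U n 1 1, Complex.exp (-(Complex.I * ξ)) / U n 1 1]

/-- the global transfer matrix `𝕋(ξ) = T₀(ξ)T₁(ξ)⋯T_{n₀}(ξ)` -/
def TT (n0 : ℕ) (U : ℤ → Matrix (Fin 2) (Fin 2) ℂ) (ξ : ℂ) : Matrix (Fin 2) (Fin 2) ℂ :=
  ((List.range (n0 + 1)).map fun k => Tmat U ξ (k : ℤ)).prod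

/-- the Wronskian-type determinant `𝒲_n(ψ₁,ψ₂) = det(Π_nψ₁, Π_nψ₂)` where
`Π_nψ = (⟨L|ψ(n)⟩, ⟨R|ψ(n+1)⟩)ᵀ` -/
def Wr (ψ₁ ψ₂ : ℤ → C2) (n : ℤ) : ℂ :=
  ψ₁ n 0 * ψ₂ (n + 1) 1 - ψ₂ n 0 * ψ₁ (n + 1) 1

/-- outgoing state -/
def Outgoing (n0 : ℕ) (ψ : ℤ → C2) : Prop :=
  ∀ n : ℕ, ψ (-(n : ℤ)) 1 = 0 ∧ ψ ((n0 : ℤ) + n) 0 = 0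

/-- member of `ℋ^out_N` -/
def OutgoingFrom (n0 : ℕ) (N : ℕ) (ψ : ℤ → C2) : Prop :=
  ∀ n : ℕ, N ≤ n → ψ (-(n : ℤ)) 1 = 0 ∧ ψ ((n0 : ℤ) + n) 0 = 0

/-- incoming state -/
def Incoming (n0 : ℕ) (φ : ℤ → C2) : Prop :=
  ∀ n : ℕ, φ (-(n : ℤ)) 0 = 0 ∧ φ ((n0 : ℤ) + n) 1 = 0

/-- the pairing `⟨φ, ψ⟩ = Σ_{n∈ℤ} (φ(n), ψ(n))_{ℂ²}` -/
def pairing (φ ψ : ℤ → C2) : ℂ :=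
  ∑' n : ℤ, ∑ i : Fin 2, (starRingEnd ℂ) (φ n i) * ψ n i

/-- restriction of a state to `[n₀]` -/
def resK (n0 : ℕ) (ψ : ℤ → C2) : Fin (n0 + 1) × Fin 2 → ℂ :=
  fun p => ψ ((p.1 : ℕ) : ℤ) p.2

/-- the Jost solution `ψ_out^-(·;ξ)`: solution equal to `e^{-inξ}|L⟩` for `n ≤ -1` -/
def JostOutMinus (U : ℤ → Matrix (Fin 2) (Fin 2) ℂ) (ξ : ℂ) (ψ : ℤ → C2) : Prop :=
  IsSol U (Complex.exp (-(Complex.I * ξ))) ψ ∧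
    ∀ n : ℤ, n ≤ -1 → ψ n = ![Complex.exp (-(Complex.I * (n : ℂ) * ξ)), 0]

/-- the Jost solution `ψ_out^+(·;ξ)`: solution equal to `e^{inξ}|R⟩` for `n ≥ n₀+1` -/
def JostOutPlus (n0 : ℕ) (U : ℤ → Matrix (Fin 2) (Fin 2) ℂ) (ξ : ℂ) (ψ : ℤ → C2) : Prop :=
  IsSol U (Complex.exp (-(Complex.I * ξ))) ψ ∧
    ∀ n : ℤ, (n0 : ℤ) + 1 ≤ n → ψ n = ![0, Complex.exp (Complex.I * (n : ℂ) * ξ)]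

/-- the Jost solution `ψ_in^-(·;ξ)`: solution equal to `e^{inξ}|R⟩` for `n ≤ -1` -/
def JostInMinus (U : ℤ → Matrix (Fin 2) (Fin 2) ℂ) (ξ : ℂ) (ψ : ℤ → C2) : Prop :=
  IsSol U (Complex.exp (-(Complex.I * ξ))) ψ ∧
    ∀ n : ℤ, n ≤ -1 → ψ n = ![0, Complex.exp (Complex.I * (n : ℂ) * ξ)]

/-- the Jost solution `ψ_in^+(·;ξ)`: solution equal to `e^{-inξ}|L⟩` for `n ≥ n₀+1` -/
def JostInPlus (n0 : ℕ) (U : ℤ → Matrix (Fin 2) (Fin 2) ℂ) (ξ : ℂ) (ψ : ℤ → C2) : Prop :=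
  IsSol U (Complex.exp (-(Complex.I * ξ))) ψ ∧
    ∀ n : ℤ, (n0 : ℤ) + 1 ≤ n → ψ n = ![Complex.exp (-(Complex.I * (n : ℂ) * ξ)), 0]

/-! `𝒦` is the block-diagonal unitary `⊕ₘ Uₘ` followed by the shift moving the
`L`-component at site `m` to `m - 1` and the `R`-component to `m + 1`. Restricting to `[n₀]`
loses exactly the `L`-component leaving site `0`, which is `P₀v(0)`, and the `R`-component
leaving site `n₀`, which is `Q_{n₀}v(n₀)`; every other component survives, so the norm identity
is unitarity of the coins. -/

theorem Matrix.sum_norm_sq_mulVec_of_mem_unitaryGroup {𝕜 ι : Type*} [RCLike 𝕜] [Fintype ι]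
    [DecidableEq ι] {W : Matrix ι ι 𝕜} (hW : W ∈ unitaryGroup ι 𝕜) (w : ι → 𝕜) :
    ∑ i, ‖(W *ᵥ w) i‖ ^ 2 = ∑ i, ‖w i‖ ^ 2 := by
  have star_dotProduct_self (x : ι → 𝕜) : star x ⬝ᵥ x = ((∑ i, ‖x i‖ ^ 2 : ℝ) : 𝕜) := by
    simp [dotProduct, RCLike.conj_mul]
  have hWW : Wᴴ * W = 1 := by rw [← star_eq_conjTranspose]; exact hW.1
  have key : star (W *ᵥ w) ⬝ᵥ (W *ᵥ w) = star w ⬝ᵥ w := by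
    rw [star_mulVec, ← dotProduct_mulVec, mulVec_mulVec, hWW, one_mulVec]
  exact_mod_cast (star_dotProduct_self _).symm.trans (key.trans (star_dotProduct_self w))

section RestrictedEvolution

variable {n0 : ℕ} {U : ℤ → Matrix (Fin 2) (Fin 2) ℂ}

theorem sum_norm_sq_Pmat_mulVec (n : ℤ) (w : C2) :
    ∑ i, ‖(Pmat U n *ᵥ w) i‖ ^ 2 = ‖(U n *ᵥ w) 0‖ ^ 2 := by
  simp [Pmat, mulVec, dotProduct, Fin.sum_univ_two]

theorem sum_norm_sq_Qmat_mulVec (n : ℤ) (w : C2) :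
    ∑ i, ‖(Qmat U n *ᵥ w) i‖ ^ 2 = ‖(U n *ᵥ w) 1‖ ^ 2 := by
  simp [Qmat, mulVec, dotProduct, Fin.sum_univ_two]

variable (v : Fin (n0 + 1) × Fin 2 → ℂ)

theorem Kmat_mulVec_last_zero : (Kmat n0 U *ᵥ v) (Fin.last n0, 0) = 0 := by
  refine Fintype.sum_eq_zero _ fun q => ?_
  have : (q.1 : ℕ) ≠ n0 + 1 := q.1.isLt.ne
  simp [Kmat, this]

theorem Kmat_mulVec_zero_one : (Kmat n0 U *ᵥ v) (0, 1) = 0 :=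
  Fintype.sum_eq_zero _ fun q => by simp [Kmat]

theorem Kmat_mulVec_castSucc_zero (m : Fin n0) :
    (Kmat n0 U *ᵥ v) (m.castSucc, 0) = (U (m.succ : ℕ) *ᵥ fun j => v (m.succ, j)) 0 := by
  simp only [mulVec, dotProduct, Fintype.sum_prod_type]
  rw [Finset.sum_eq_single m.succ]
  · simp [Kmat]
  · intro k _ hk
    have : (k : ℕ) ≠ m + 1 := fun h => hk (Fin.ext (by simpa using h))
    simp [Kmat, this]
  · simp

theorem Kmat_mulVec_succ_one (m : Fin n0) :
    (Kmat n0 U *ᵥ v) (m.succ, 1) = (U (m.castSucc : ℕ) *ᵥ fun j => v (m.castSucc, j)) 1 := by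
  simp only [mulVec, dotProduct, Fintype.sum_prod_type]
  rw [Finset.sum_eq_single m.castSucc]
  · simp [Kmat]
  · intro k _ hk
    have : (k : ℕ) ≠ m := fun h => hk (Fin.ext (by simpa using h))
    simp [Kmat, this]
  · simp

theorem sum_norm_sq_Kmat_mulVec_add_boundary :
    ∑ p, ‖(Kmat n0 U *ᵥ v) p‖ ^ 2 + ‖(U 0 *ᵥ fun j => v (0, j)) 0‖ ^ 2 +
        ‖(U n0 *ᵥ fun j => v (Fin.last n0, j)) 1‖ ^ 2 =
      ∑ m : Fin (n0 + 1), ∑ i, ‖(U m *ᵥ fun j => v (m, j)) i‖ ^ 2 := by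
  set w : Fin (n0 + 1) → C2 := fun m => U m *ᵥ fun j => v (m, j)
  have hK : ∑ p, ‖(Kmat n0 U *ᵥ v) p‖ ^ 2 =
      ∑ m : Fin n0, ‖w m.succ 0‖ ^ 2 + ∑ m : Fin n0, ‖w m.castSucc 1‖ ^ 2 := by
    rw [Fintype.sum_prod_type]
    simp only [Fin.sum_univ_two, Finset.sum_add_distrib]
    rw [Fin.sum_univ_castSucc, Fin.sum_univ_succ]
    simp only [Kmat_mulVec_last_zero, Kmat_mulVec_zero_one, Kmat_mulVec_castSucc_zero,
      Kmat_mulVec_succ_one, w]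
    simp
  have hw : ∑ m, ∑ i, ‖w m i‖ ^ 2 =
      ‖w 0 0‖ ^ 2 + ∑ m : Fin n0, ‖w m.succ 0‖ ^ 2 +
        (∑ m : Fin n0, ‖w m.castSucc 1‖ ^ 2 + ‖w (Fin.last n0) 1‖ ^ 2) := by
    simp only [Fin.sum_univ_two, Finset.sum_add_distrib]
    rw [Fin.sum_univ_succ (f := fun m => ‖w m 0‖ ^ 2),
      Fin.sum_univ_castSucc (f := fun m => ‖w m 1‖ ^ 2)]
  change _ = ∑ m, ∑ i, ‖w m i‖ ^ 2
  rw [hK, hw]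
  simp only [w, Fin.val_zero, Fin.val_last, Nat.cast_zero]
  ring

end RestrictedEvolution

theorem stmt_0_general (n0 : ℕ) (U : ℤ → Matrix (Fin 2) (Fin 2) ℂ)
    (hU : CoinsUnitary U) :
    (∀ v : Fin (n0 + 1) × Fin 2 → ℂ,
      (∑ p : Fin (n0 + 1) × Fin 2, ‖(Kmat n0 U).mulVec v p‖ ^ 2) +
        (∑ i : Fin 2, ‖(Pmat U 0).mulVec (fun j => v (0, j)) i‖ ^ 2) +
        (∑ i : Fin 2,
          ‖(Qmat U (n0 : ℤ)).mulVec (fun j => v (Fin.last n0, j)) i‖ ^ 2) =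
        ∑ p : Fin (n0 + 1) × Fin 2, ‖v p‖ ^ 2) ∧
    ∀ v : Fin (n0 + 1) × Fin 2 → ℂ,
      Real.sqrt (∑ p : Fin (n0 + 1) × Fin 2, ‖(Kmat n0 U).mulVec v p‖ ^ 2) ≤
        Real.sqrt (∑ p : Fin (n0 + 1) × Fin 2, ‖v p‖ ^ 2) := by
  have norm_identity : ∀ v : Fin (n0 + 1) × Fin 2 → ℂ,
      ∑ p, ‖(Kmat n0 U *ᵥ v) p‖ ^ 2 + ∑ i, ‖(Pmat U 0 *ᵥ fun j => v (0, j)) i‖ ^ 2 +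
          ∑ i, ‖(Qmat U n0 *ᵥ fun j => v (Fin.last n0, j)) i‖ ^ 2 =
        ∑ p, ‖v p‖ ^ 2 := by
    intro v
    rw [sum_norm_sq_Pmat_mulVec, sum_norm_sq_Qmat_mulVec, sum_norm_sq_Kmat_mulVec_add_boundary,
      Fintype.sum_prod_type]
    exact Finset.sum_congr rfl fun m _ => sum_norm_sq_mulVec_of_mem_unitaryGroup (hU m) _
  refine ⟨norm_identity, fun v => Real.sqrt_le_sqrt ?_⟩
  rw [← norm_identity v, add_assoc]
  exact le_add_of_nonneg_right (by positivity)

/-- the norm identity for `𝒦` and the bound `‖𝒦‖ ≤ 1`. -/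
theorem stmt_0 (n0 : ℕ) (U : ℤ → Matrix (Fin 2) (Fin 2) ℂ)
    (hU : CoinsUnitary U) (hA1 : A1 n0 U) :
    (∀ v : Fin (n0 + 1) × Fin 2 → ℂ,
      (∑ p : Fin (n0 + 1) × Fin 2, ‖(Kmat n0 U).mulVec v p‖ ^ 2) +
        (∑ i : Fin 2, ‖(Pmat U 0).mulVec (fun j => v (0, j)) i‖ ^ 2) +
        (∑ i : Fin 2,
          ‖(Qmat U (n0 : ℤ)).mulVec (fun j => v (Fin.last n0, j)) i‖ ^ 2) =
        ∑ p : Fin (n0 + 1) × Fin 2, ‖v p‖ ^ 2) ∧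
    ∀ v : Fin (n0 + 1) × Fin 2 → ℂ,
      Real.sqrt (∑ p : Fin (n0 + 1) × Fin 2, ‖(Kmat n0 U).mulVec v p‖ ^ 2) ≤
        Real.sqrt (∑ p : Fin (n0 + 1) × Fin 2, ‖v p‖ ^ 2) :=
  stmt_0_general n0 U hU
end
end

section
/- Assume (A1) and (A2). For every ξ ∈ ℂ, the Wronskian of the two outgoing Jost solutions at n = −1 satisfies 𝒲_{−1}(ψ_out^−, ψ_out^+) := det(Π_{−1}ψ_out^−(·;ξ), Π_{−1}ψ_out^+(·;ξ)) = e^{i(n₀+2)ξ} 𝕋₂₂(ξ). -/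
/-!
Each local transfer matrix `T_n(ξ)` maps `Π_nψ` to `Π_{n-1}ψ` for every solution of
`𝒰ψ = e^{-iξ}ψ` (this is where unitarity of the coin enters), so `𝕋(ξ) Π_{n₀}ψ = Π_{-1}ψ`.
Since the coins are trivial outside `[n₀]`, `Π_{n₀}ψ_out^+ = (0, e^{i(n₀+1)ξ})` and
`Π_{-1}ψ_out^- = (e^{iξ}, 0)`; the Wronskian at `-1` is then `e^{iξ} 𝕋₂₂(ξ) e^{i(n₀+1)ξ}`.
-/

open Complex Matrix

noncomputable section

/-- The paper's `Π_nψ = (⟨L|ψ(n)⟩, ⟨R|ψ(n+1)⟩)ᵀ`. -/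
def piVec (ψ : ℤ → C2) (n : ℤ) : C2 :=
  ![ψ n 0, ψ (n + 1) 1]

lemma unitary_two_relations {A : Matrix (Fin 2) (Fin 2) ℂ} (hA : A ∈ unitaryGroup (Fin 2) ℂ) :
    starRingEnd ℂ (A 0 0) * A 0 0 + starRingEnd ℂ (A 1 0) * A 1 0 = 1 ∧
    starRingEnd ℂ (A 0 0) * A 0 1 + starRingEnd ℂ (A 1 0) * A 1 1 = 0 ∧
    A 1 0 * starRingEnd ℂ (A 1 0) + A 1 1 * starRingEnd ℂ (A 1 1) = 1 := by
  have hl : star A * A = 1 := mem_unitaryGroup_iff'.mp hA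
  have hr : A * star A = 1 := mem_unitaryGroup_iff.mp hA
  refine ⟨?_, ?_, ?_⟩
  · simpa [mul_apply, Fin.sum_univ_two] using congrFun (congrFun hl 0) 0
  · simpa [mul_apply, Fin.sum_univ_two] using congrFun (congrFun hl 0) 1
  · simpa [mul_apply, Fin.sum_univ_two] using congrFun (congrFun hr 1) 1

/-- `|a|² + |c|² = 1 = |c|² + |d|²`, so `|a| = |d|`. -/
lemma unitary_two_apply_one_one_ne_zero {A : Matrix (Fin 2) (Fin 2) ℂ}
    (hA : A ∈ unitaryGroup (Fin 2) ℂ) (ha : A 0 0 ≠ 0) : A 1 1 ≠ 0 := by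
  obtain ⟨hcol, -, hrow⟩ := unitary_two_relations hA
  intro hd
  rw [hd, zero_mul, add_zero, mul_comm] at hrow
  have : starRingEnd ℂ (A 0 0) * A 0 0 = 0 := by linear_combination hcol - hrow
  simp_all

namespace IsSol

variable {U : ℤ → Matrix (Fin 2) (Fin 2) ℂ} {μ : ℂ} {ψ : ℤ → C2}

lemma left_eq (h : IsSol U μ ψ) (n : ℤ) :
    U (n + 1) 0 0 * ψ (n + 1) 0 + U (n + 1) 0 1 * ψ (n + 1) 1 = μ * ψ n 0 := by
  simpa [QWop, Pmat, Qmat, mulVec, dotProduct, Fin.sum_univ_two] using congrFun (h n) 0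

lemma right_eq (h : IsSol U μ ψ) (n : ℤ) :
    U (n - 1) 1 0 * ψ (n - 1) 0 + U (n - 1) 1 1 * ψ (n - 1) 1 = μ * ψ n 1 := by
  simpa [QWop, Pmat, Qmat, mulVec, dotProduct, Fin.sum_univ_two] using congrFun (h n) 1

lemma left_eq_of_coin_eq_one (h : IsSol U μ ψ) {n : ℤ} (hU : U (n + 1) = 1) :
    ψ (n + 1) 0 = μ * ψ n 0 := by
  simpa [hU] using h.left_eq n

lemma right_eq_of_coin_eq_one (h : IsSol U μ ψ) {n : ℤ} (hU : U (n - 1) = 1) :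
    ψ (n - 1) 1 = μ * ψ n 1 := by
  simpa [hU] using h.right_eq n

end IsSol

section Transfer

variable {U : ℤ → Matrix (Fin 2) (Fin 2) ℂ} {ξ : ℂ} {ψ : ℤ → C2}

lemma Tmat_mulVec_piVec (h : IsSol U (exp (-(I * ξ))) ψ) {n : ℤ}
    (hU : U n ∈ unitaryGroup (Fin 2) ℂ) (ha : U n 0 0 ≠ 0) :
    Tmat U ξ n *ᵥ piVec ψ n = piVec ψ (n - 1) := by
  obtain ⟨hcol, horth, -⟩ := unitary_two_relations hU
  have hd := unitary_two_apply_one_one_ne_zero hU ha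
  have ha' : starRingEnd ℂ (U n 0 0) ≠ 0 := by simpa using ha
  have hexp : exp (I * ξ) * exp (-(I * ξ)) = 1 := by rw [← exp_add]; simp
  have hleft := h.left_eq (n - 1)
  have hright := h.right_eq (n + 1)
  simp only [sub_add_cancel, add_sub_cancel_right] at hleft hright
  ext i
  fin_cases i
  · simp only [piVec, Tmat, mulVec, dotProduct, Fin.sum_univ_two, of_apply, cons_val',
      cons_val_zero, cons_val_one, empty_val', cons_val_fin_one, sub_add_cancel, Fin.zero_eta,
      Fin.isValue]
    rw [div_mul_eq_mul_div, div_mul_eq_mul_div, ← add_div, div_eq_iff ha']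
    linear_combination exp (I * ξ) * starRingEnd ℂ (U n 0 0) * hleft
      + exp (I * ξ) * starRingEnd ℂ (U n 1 0) * hright
      - exp (I * ξ) * ψ n 0 * hcol - exp (I * ξ) * ψ n 1 * horth
      + (starRingEnd ℂ (U n 0 0) * ψ (n - 1) 0 + starRingEnd ℂ (U n 1 0) * ψ (n + 1) 1) * hexp
  · simp only [piVec, Tmat, mulVec, dotProduct, Fin.sum_univ_two, of_apply, cons_val',
      cons_val_zero, cons_val_one, empty_val', cons_val_fin_one, sub_add_cancel, Fin.mk_one,
      Fin.isValue]
    rw [div_mul_eq_mul_div, div_mul_eq_mul_div, ← add_div, div_eq_iff hd]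
    linear_combination -hright

lemma list_prod_Tmat_mulVec_piVec (h : IsSol U (exp (-(I * ξ))) ψ) (hU : CoinsUnitary U)
    (hA2 : A2 U) (k : ℕ) :
    ((List.range k).map fun j : ℕ => Tmat U ξ j).prod *ᵥ piVec ψ ((k : ℤ) - 1) =
      piVec ψ (-1) := by
  induction k with
  | zero => simp
  | succ k ih =>
    rw [List.range_succ, List.map_append, List.prod_append, ← mulVec_mulVec]
    simpa [Tmat_mulVec_piVec h (hU k) (hA2 k)] using ih

lemma TT_eq_list_prod (n0 : ℕ) (U : ℤ → Matrix (Fin 2) (Fin 2) ℂ) (ξ : ℂ) :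
    TT n0 U ξ = ((List.range (n0 + 1)).map fun j : ℕ => Tmat U ξ j).prod := by
  simp [TT, ← List.map_eq_flatMap, Function.comp_def]

lemma TT_mulVec_piVec (n0 : ℕ) (h : IsSol U (exp (-(I * ξ))) ψ) (hU : CoinsUnitary U)
    (hA2 : A2 U) : TT n0 U ξ *ᵥ piVec ψ n0 = piVec ψ (-1) := by
  rw [TT_eq_list_prod]
  simpa using list_prod_Tmat_mulVec_piVec h hU hA2 (n0 + 1)

end Transfer

/-- `𝒲_{-1}(ψ_out^-, ψ_out^+) = e^{i(n₀+2)ξ} 𝕋₂₂(ξ)`. -/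
theorem stmt_4 (n0 : ℕ) (U : ℤ → Matrix (Fin 2) (Fin 2) ℂ)
    (hU : CoinsUnitary U) (hA1 : A1 n0 U) (hA2 : A2 U) (ξ : ℂ)
    (ψm ψp : ℤ → C2) (hm : JostOutMinus U ξ ψm) (hp : JostOutPlus n0 U ξ ψp) :
    Wr ψm ψp (-1) = Complex.exp (Complex.I * ((n0 : ℂ) + 2) * ξ) * TT n0 U ξ 1 1 := by
  have hm_neg_one : ψm (-1) = ![exp (I * ξ), 0] := by simpa using hm.2 (-1) le_rfl
  have hp_succ : ψp (n0 + 1) = ![0, exp (I * ((n0 : ℂ) + 1) * ξ)] := by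
    simpa using hp.2 (n0 + 1) le_rfl
  have hm_zero : ψm 0 1 = 0 := by
    have := hm.1.right_eq_of_coin_eq_one (n := 0) (hA1 _ (.inl (by norm_num)))
    simpa [hm_neg_one, exp_ne_zero] using this
  have hp_n0 : ψp n0 0 = 0 := by
    have := hp.1.left_eq_of_coin_eq_one (n := n0) (hA1 _ (.inr (by omega)))
    simpa [hp_succ, exp_ne_zero] using this.symm
  have htransfer : ψp 0 1 = TT n0 U ξ 1 1 * exp (I * ((n0 : ℂ) + 1) * ξ) := by
    have := congrFun (TT_mulVec_piVec n0 hp.1 hU hA2) 1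
    simpa [piVec, mulVec, dotProduct, Fin.sum_univ_two, hp_n0, hp_succ] using this.symm
  have hwr : Wr ψm ψp (-1) = exp (I * ξ) * ψp 0 1 := by
    simp [Wr, hm_neg_one, hm_zero]
  rw [hwr, htransfer, mul_left_comm, ← exp_add]
  ring_nf
end
end

section
/- Assume (A1) and (A2), and let ξ ∈ ℝ be real. Then the two outgoing Jost solutions ψ_out^−(·;ξ) and ψ_out^+(·;ξ) are linearly independent, and the 2×2 scattering matrix Σ(ξ), defined by the relation (ψ_in^+(·;ξ), ψ_in^−(·;ξ)) = (ψ_out^−(·;ξ), ψ_out^+(·;ξ)) Σ(ξ) inside the two-dimensional solution space of 𝒰ψ = e^{−iξ}ψ, is a unitary matrix. In particular, writing Σ(ξ) = ((t₋, r₋), (r₊, t₊)), one has |t₋|² + |r₋|² = 1 and |t₊|² + |r₊|² = 1. -/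
open Complex Matrix

noncomputable section

/-! For real `ξ` the eigenvalue `μ = e^{-iξ}` has modulus one, so unitarity of the coins makes
the current `J(φ, ψ)(n) = conj φ(n)_L ψ(n)_L - conj φ(n+1)_R ψ(n+1)_R` independent of `n` for
any two solutions. On the plane-wave tails of the Jost solutions it takes the values `±1` and `0`,
so the outgoing pair has Gram matrix `[[1, A], [conj A, -1]]`, whose determinant
`-(1 + |A|²)` never vanishes: they are independent. Since `a_n, d_n ≠ 0`, a solution is
determined by its value at `0`, so the solution space is two-dimensional and `Σ` exists.
Rewriting the currents of the incoming solutions through `Σ` forces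
`Σ = [[t, -s A], [t conj A, s]]` with `|t|² (1 + |A|²) = |s|² (1 + |A|²) = 1`, a unitary matrix. -/

open ComplexConjugate

section Walk

variable {U : ℤ → Matrix (Fin 2) (Fin 2) ℂ} {μ : ℂ} {φ ψ : ℤ → C2}

lemma QWop_add : QWop U (φ + ψ) = QWop U φ + QWop U ψ := by
  ext n : 1
  simp only [QWop, Pi.add_apply, mulVec_add]
  abel

lemma QWop_smul (c : ℂ) : QWop U (c • ψ) = c • QWop U ψ := by
  ext n : 1
  simp only [QWop, Pi.smul_apply, mulVec_smul, smul_add]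

def solutions (U : ℤ → Matrix (Fin 2) (Fin 2) ℂ) (μ : ℂ) : Submodule ℂ (ℤ → C2) where
  carrier := {ψ | IsSol U μ ψ}
  zero_mem' n := by simp [QWop]
  add_mem' {φ ψ} hφ hψ n := by
    rw [QWop_add, Pi.add_apply, Pi.add_apply, hφ n, hψ n, smul_add]
  smul_mem' c ψ hψ n := by
    rw [QWop_smul, Pi.smul_apply, Pi.smul_apply, hψ n, smul_comm]

lemma IsSol.left_mover (h : IsSol U μ ψ) (n : ℤ) :
    U n 0 0 * ψ n 0 + U n 0 1 * ψ n 1 = μ * ψ (n - 1) 0 := by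
  simpa [QWop, Pmat, Qmat] using congrFun (h (n - 1)) 0

lemma IsSol.right_mover (h : IsSol U μ ψ) (n : ℤ) :
    U n 1 0 * ψ n 0 + U n 1 1 * ψ n 1 = μ * ψ (n + 1) 1 := by
  simpa [QWop, Pmat, Qmat] using congrFun (h (n + 1)) 1

lemma IsSol.coin_mulVec (h : IsSol U μ ψ) (n : ℤ) :
    U n *ᵥ ψ n = μ • ![ψ (n - 1) 0, ψ (n + 1) 1] := by
  ext i
  fin_cases i
  · simpa [mulVec, dotProduct] using h.left_mover n
  · simpa [mulVec, dotProduct] using h.right_mover n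

lemma apply_one_one_ne_zero_of_mem_unitaryGroup {V : Matrix (Fin 2) (Fin 2) ℂ}
    (hV : V ∈ unitaryGroup (Fin 2) ℂ) (h : V 0 0 ≠ 0) : V 1 1 ≠ 0 := by
  intro h11
  have hcol := congrFun (congrFun (mem_unitaryGroup_iff'.1 hV) 0) 0
  have hrow := congrFun (congrFun (mem_unitaryGroup_iff.1 hV) 1) 1
  simp only [mul_apply, star_apply, RCLike.star_def, Fin.sum_univ_two, one_apply_eq, h11,
    map_zero, mul_zero, add_zero] at hcol hrow
  have h00 : conj (V 0 0) * V 0 0 = 0 := by linear_combination hcol - hrow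
  exact h (by simpa [Complex.conj_mul'] using h00)

lemma C2_ext {v : C2} (h0 : v 0 = 0) (h1 : v 1 = 0) : v = 0 := by
  ext i
  fin_cases i <;> assumption

variable (hU : CoinsUnitary U) (hA2 : A2 U) (hμ : μ ≠ 0)
include hA2 hμ

lemma IsSol.apply_add_one_eq_zero (h : IsSol U μ ψ) {n : ℤ} (hn : ψ n = 0) :
    ψ (n + 1) = 0 := by
  have hR : ψ (n + 1) 1 = 0 := by
    simpa [hn, hμ] using (h.right_mover n).symm
  refine C2_ext ?_ hR
  have hL := h.left_mover (n + 1)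
  simp only [add_sub_cancel_right, hn, hR, Pi.zero_apply, mul_zero, add_zero] at hL
  simpa [hA2 (n + 1)] using hL

include hU in
lemma IsSol.apply_sub_one_eq_zero (h : IsSol U μ ψ) {n : ℤ} (hn : ψ n = 0) :
    ψ (n - 1) = 0 := by
  have hL : ψ (n - 1) 0 = 0 := by
    simpa [hn, hμ] using (h.left_mover n).symm
  refine C2_ext hL ?_
  have hR := h.right_mover (n - 1)
  simp only [sub_add_cancel, hn, hL, Pi.zero_apply, mul_zero, zero_add] at hR
  simpa [apply_one_one_ne_zero_of_mem_unitaryGroup (hU (n - 1)) (hA2 (n - 1))] using hR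

include hU in
lemma IsSol.eq_zero_of_apply_zero (h : IsSol U μ ψ) (h0 : ψ 0 = 0) : ψ = 0 := by
  ext1 n
  induction n using Int.induction_on with
  | zero => exact h0
  | succ k ih => exact h.apply_add_one_eq_zero hA2 hμ ih
  | pred k ih => exact h.apply_sub_one_eq_zero hU hA2 hμ ih

include hU in
lemma exists_eq_smul_add_smul_of_independent {ψ₁ ψ₂ : ℤ → C2}
    (h₁ : IsSol U μ ψ₁) (h₂ : IsSol U μ ψ₂)
    (hind : ∀ a b : ℂ, a • ψ₁ + b • ψ₂ = 0 → a = 0 ∧ b = 0) (hφ : IsSol U μ φ) :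
    ∃ a b : ℂ, φ = a • ψ₁ + b • ψ₂ := by
  have hcomb (a b : ℂ) : a • ψ₁ + b • ψ₂ ∈ solutions U μ :=
    add_mem (Submodule.smul_mem _ a h₁) (Submodule.smul_mem _ b h₂)
  have hli : LinearIndependent ℂ ![ψ₁ 0, ψ₂ 0] :=
    LinearIndependent.pair_iff.2 fun a b hab =>
      hind a b (IsSol.eq_zero_of_apply_zero hU hA2 hμ (hcomb a b) (by simpa using hab))
  have hspan := hli.span_eq_top_of_card_eq_finrank (by simp)
  obtain ⟨a, b, hab⟩ : ∃ a b : ℂ, a • ψ₁ 0 + b • ψ₂ 0 = φ 0 := by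
    rw [← Submodule.mem_span_pair, ← Matrix.range_cons_cons_empty, hspan]
    trivial
  refine ⟨a, b, sub_eq_zero.1 (IsSol.eq_zero_of_apply_zero hU hA2 hμ
    (sub_mem (show φ ∈ solutions U μ from hφ) (hcomb a b)) ?_)⟩
  simp [← hab]

end Walk

/-- The current through the bond `(n, n + 1)`: the left-mover at `n` and the right-mover at
`n + 1` are the two amplitudes crossing it. -/
def current (φ ψ : ℤ → C2) (n : ℤ) : ℂ :=
  conj (φ n 0) * ψ n 0 - conj (φ (n + 1) 1) * ψ (n + 1) 1

section Current

variable {φ ψ η : ℤ → C2} {n : ℤ}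

lemma current_zero_right : current φ 0 n = 0 := by
  simp [current]

lemma current_swap : current ψ φ n = conj (current φ ψ n) := by
  simp only [current, map_sub, map_mul, conj_conj]
  ring

lemma current_smul_add_smul_left (a b : ℂ) :
    current (a • φ + b • ψ) η n = conj a * current φ η n + conj b * current ψ η n := by
  simp only [current, Pi.add_apply, Pi.smul_apply, smul_eq_mul, map_add, map_mul]
  ring

lemma current_smul_add_smul_right (a b : ℂ) :
    current η (a • φ + b • ψ) n = a * current η φ n + b * current η ψ n := by
  simp only [current, Pi.add_apply, Pi.smul_apply, smul_eq_mul]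
  ring

lemma dotProduct_star_mulVec_of_mem_unitaryGroup {ι : Type*} [Fintype ι] [DecidableEq ι]
    {V : Matrix ι ι ℂ} (hV : V ∈ unitaryGroup ι ℂ) (v w : ι → ℂ) :
    star (V *ᵥ v) ⬝ᵥ (V *ᵥ w) = star v ⬝ᵥ w := by
  rw [star_mulVec, dotProduct_mulVec, vecMul_vecMul, ← star_eq_conjTranspose,
    mem_unitaryGroup_iff'.1 hV, vecMul_one]

variable {U : ℤ → Matrix (Fin 2) (Fin 2) ℂ} {μ : ℂ}

/-- Conservation of the current: unitarity of the coin `U n` balances the flux through the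
two bonds adjacent to `n`. -/
lemma IsSol.current_sub_one (hU : CoinsUnitary U) (hμ : conj μ * μ = 1)
    (hφ : IsSol U μ φ) (hψ : IsSol U μ ψ) (n : ℤ) :
    current φ ψ (n - 1) = current φ ψ n := by
  have h := dotProduct_star_mulVec_of_mem_unitaryGroup (hU n) (φ n) (ψ n)
  rw [hφ.coin_mulVec, hψ.coin_mulVec] at h
  simp only [dotProduct, Fin.sum_univ_two, Pi.star_apply, Pi.smul_apply, smul_eq_mul,
    star_mul', RCLike.star_def, Matrix.cons_val_zero, Matrix.cons_val_one] at h
  simp only [current, sub_add_cancel]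
  linear_combination
    h - (conj (φ (n - 1) 0) * ψ (n - 1) 0 + conj (φ (n + 1) 1) * ψ (n + 1) 1) * hμ

lemma IsSol.current_eq (hU : CoinsUnitary U) (hμ : conj μ * μ = 1)
    (hφ : IsSol U μ φ) (hψ : IsSol U μ ψ) (n m : ℤ) :
    current φ ψ n = current φ ψ m := by
  have key (k : ℤ) : current φ ψ k = current φ ψ 0 := by
    induction k using Int.induction_on with
    | zero => rfl
    | succ k ih => rw [← ih, ← hφ.current_sub_one hU hμ hψ, add_sub_cancel_right]
    | pred k ih => rw [← ih, hφ.current_sub_one hU hμ hψ]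
  rw [key n, key m]

end Current

lemma conj_exp_mul_exp {z : ℂ} (hz : z.re = 0) : conj (exp z) * exp z = 1 := by
  rw [Complex.conj_mul', Complex.norm_exp, hz]
  simp

section Jost

variable {n0 : ℕ} {U : ℤ → Matrix (Fin 2) (Fin 2) ℂ} {ξ : ℝ} {φ ψ : ℤ → C2}
  (hU : CoinsUnitary U)
include hU

lemma IsSol.current_eq_of_real
    (hφ : IsSol U (exp (-(I * ξ))) φ) (hψ : IsSol U (exp (-(I * ξ))) ψ) (n m : ℤ) :
    current φ ψ n = current φ ψ m :=
  hφ.current_eq hU (conj_exp_mul_exp (by simp)) hψ n m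

lemma JostOutMinus.current_self (h : JostOutMinus U ξ ψ) (n : ℤ) : current ψ ψ n = 1 := by
  rw [h.1.current_eq_of_real hU h.1 n (-2), current, h.2 (-2) (by norm_num),
    show (-2 : ℤ) + 1 = -1 by norm_num, h.2 (-1) le_rfl]
  simpa using conj_exp_mul_exp (by simp)

lemma JostInMinus.current_self (h : JostInMinus U ξ ψ) (n : ℤ) : current ψ ψ n = -1 := by
  rw [h.1.current_eq_of_real hU h.1 n (-2), current, h.2 (-2) (by norm_num),
    show (-2 : ℤ) + 1 = -1 by norm_num, h.2 (-1) le_rfl]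
  simpa using conj_exp_mul_exp (by simp)

lemma JostOutPlus.current_self (h : JostOutPlus n0 U ξ ψ) (n : ℤ) : current ψ ψ n = -1 := by
  rw [h.1.current_eq_of_real hU h.1 n (n0 + 1), current, h.2 (n0 + 1) le_rfl,
    h.2 (n0 + 1 + 1) (by omega)]
  simpa using conj_exp_mul_exp (by simp)

lemma JostInPlus.current_self (h : JostInPlus n0 U ξ ψ) (n : ℤ) : current ψ ψ n = 1 := by
  rw [h.1.current_eq_of_real hU h.1 n (n0 + 1), current, h.2 (n0 + 1) le_rfl,
    h.2 (n0 + 1 + 1) (by omega)]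
  simpa using conj_exp_mul_exp (by simp)

lemma JostOutMinus.current_jostInMinus (hφ : JostOutMinus U ξ φ) (hψ : JostInMinus U ξ ψ)
    (n : ℤ) : current φ ψ n = 0 := by
  rw [hφ.1.current_eq_of_real hU hψ.1 n (-2), current, show (-2 : ℤ) + 1 = -1 by norm_num,
    hφ.2 (-1) le_rfl, hψ.2 (-2) (by norm_num)]
  simp

lemma JostInPlus.current_jostOutPlus (hφ : JostInPlus n0 U ξ φ) (hψ : JostOutPlus n0 U ξ ψ)
    (n : ℤ) : current φ ψ n = 0 := by
  rw [hφ.1.current_eq_of_real hU hψ.1 n (n0 + 1), current, hφ.2 (n0 + 1 + 1) (by omega),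
    hψ.2 (n0 + 1) le_rfl]
  simp

end Jost

lemma one_add_conj_mul_self_ne_zero (A : ℂ) : 1 + conj A * A ≠ 0 := by
  rw [Complex.conj_mul']
  norm_cast
  positivity

lemma sq_norm_add_sq_norm_of_mem_unitaryGroup {V : Matrix (Fin 2) (Fin 2) ℂ}
    (hV : V ∈ unitaryGroup (Fin 2) ℂ) (i : Fin 2) : ‖V i 0‖ ^ 2 + ‖V i 1‖ ^ 2 = 1 := by
  have h := congrFun (congrFun (mem_unitaryGroup_iff.1 hV) i) i
  simp only [mul_apply, Fin.sum_univ_two, star_apply, RCLike.star_def, Complex.mul_conj',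
    one_apply_eq] at h
  exact_mod_cast h

lemma mem_unitaryGroup_of_conj_mul_self (A a d : ℂ) (ha : conj a * a * (1 + conj A * A) = 1)
    (hd : conj d * d * (1 + conj A * A) = 1) :
    !![a, -(d * A); a * conj A, d] ∈ unitaryGroup (Fin 2) ℂ := by
  rw [mem_unitaryGroup_iff']
  ext i j
  fin_cases i <;> fin_cases j <;>
    simp only [Fin.zero_eta, Fin.mk_one, mul_apply, Fin.sum_univ_two, star_apply, of_apply,
      cons_val', cons_val_zero, cons_val_one, cons_val_fin_one, RCLike.star_def, map_mul, map_neg,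
      conj_conj, one_apply_eq, one_apply_ne, ne_eq, zero_ne_one,
      one_ne_zero, not_false_eq_true, Fin.isValue]
  · linear_combination ha
  · ring
  · ring
  · linear_combination hd

section Scattering

variable {n0 : ℕ} {U : ℤ → Matrix (Fin 2) (Fin 2) ℂ} {ξ : ℝ} {ψom ψop ψim ψip : ℤ → C2}
  (hU : CoinsUnitary U) (hom : JostOutMinus U ξ ψom) (hop : JostOutPlus n0 U ξ ψop)
include hU hom hop

lemma jostOut_independent (a b : ℂ) (hab : a • ψom + b • ψop = 0) : a = 0 ∧ b = 0 := by
  have hL := current_smul_add_smul_right (η := ψom) (φ := ψom) (ψ := ψop) (n := 0) a b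
  have hR := current_smul_add_smul_right (η := ψop) (φ := ψom) (ψ := ψop) (n := 0) a b
  rw [hab, current_zero_right, hom.current_self hU] at hL
  rw [hab, current_zero_right, current_swap, hop.current_self hU] at hR
  set A := current ψom ψop 0
  have ha : a * (1 + conj A * A) = 0 := by linear_combination -hL - A * hR
  have ha0 := (mul_eq_zero.1 ha).resolve_right (one_add_conj_mul_self_ne_zero A)
  exact ⟨ha0, by linear_combination hR + conj A * ha0⟩

variable (him : JostInMinus U ξ ψim) (hip : JostInPlus n0 U ξ ψip)
include him hip

lemma jost_scattering_mem_unitaryGroup {S : Matrix (Fin 2) (Fin 2) ℂ}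
    (hSp : ψip = S 0 0 • ψom + S 1 0 • ψop) (hSm : ψim = S 0 1 • ψom + S 1 1 • ψop) :
    S ∈ unitaryGroup (Fin 2) ℂ := by
  set A := current ψom ψop 0
  have hA (n : ℤ) : current ψom ψop n = A := hom.1.current_eq_of_real hU hop.1 n 0
  have hA' (n : ℤ) : current ψop ψom n = conj A := by rw [current_swap, hA]
  have hS10 : S 1 0 = S 0 0 * conj A := by
    have h := hip.current_jostOutPlus hU hop 0
    rw [hSp, current_smul_add_smul_left, hA, hop.current_self hU] at h
    simpa using congrArg conj (by linear_combination -h : conj (S 1 0) = conj (S 0 0) * A)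
  have hS01 : S 0 1 = -(S 1 1 * A) := by
    have h := hom.current_jostInMinus hU him 0
    rw [hSm, current_smul_add_smul_right, hom.current_self hU, hA] at h
    linear_combination h
  have hS00 : conj (S 0 0) * S 0 0 * (1 + conj A * A) = 1 := by
    have h := hip.current_self hU 0
    rw [hSp, current_smul_add_smul_left, current_smul_add_smul_right,
      current_smul_add_smul_right, hom.current_self hU, hA, hA', hop.current_self hU, hS10,
      map_mul, conj_conj] at h
    linear_combination h
  have hS11 : conj (S 1 1) * S 1 1 * (1 + conj A * A) = 1 := by
    have h := him.current_self hU 0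
    rw [hSm, current_smul_add_smul_left, current_smul_add_smul_right,
      current_smul_add_smul_right, hom.current_self hU, hA, hA', hop.current_self hU, hS01,
      map_neg, map_mul] at h
    linear_combination -h
  rw [S.eta_fin_two, hS10, hS01]
  exact mem_unitaryGroup_of_conj_mul_self A _ _ hS00 hS11

end Scattering

theorem stmt_5_general (n0 : ℕ) (U : ℤ → Matrix (Fin 2) (Fin 2) ℂ)
    (hU : CoinsUnitary U) (hA2 : A2 U) (ξ : ℝ)
    (ψom ψop ψim ψip : ℤ → C2)
    (hom : JostOutMinus U (ξ : ℂ) ψom) (hop : JostOutPlus n0 U (ξ : ℂ) ψop)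
    (him : JostInMinus U (ξ : ℂ) ψim) (hip : JostInPlus n0 U (ξ : ℂ) ψip) :
    (∀ a b : ℂ, a • ψom + b • ψop = 0 → a = 0 ∧ b = 0) ∧
    (∃ S : Matrix (Fin 2) (Fin 2) ℂ,
      ∀ n : ℤ, ψip n = S 0 0 • ψom n + S 1 0 • ψop n ∧
               ψim n = S 0 1 • ψom n + S 1 1 • ψop n) ∧
    ∀ S : Matrix (Fin 2) (Fin 2) ℂ,
      (∀ n : ℤ, ψip n = S 0 0 • ψom n + S 1 0 • ψop n ∧
                ψim n = S 0 1 • ψom n + S 1 1 • ψop n) →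
      S ∈ Matrix.unitaryGroup (Fin 2) ℂ ∧
      ‖S 0 0‖ ^ 2 + ‖S 0 1‖ ^ 2 = 1 ∧
      ‖S 1 1‖ ^ 2 + ‖S 1 0‖ ^ 2 = 1 := by
  have hind := jostOut_independent hU hom hop
  refine ⟨hind, ?_, fun S hS => ?_⟩
  · have hμ := exp_ne_zero (-(I * ξ))
    obtain ⟨a, b, hab⟩ :=
      exists_eq_smul_add_smul_of_independent hU hA2 hμ hom.1 hop.1 hind hip.1
    obtain ⟨c, d, hcd⟩ :=
      exists_eq_smul_add_smul_of_independent hU hA2 hμ hom.1 hop.1 hind him.1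
    exact ⟨!![a, c; b, d], fun n => ⟨by simp [hab], by simp [hcd]⟩⟩
  · have hSu := jost_scattering_mem_unitaryGroup hU hom hop him hip
      (funext fun n => (hS n).1) (funext fun n => (hS n).2)
    refine ⟨hSu, sq_norm_add_sq_norm_of_mem_unitaryGroup hSu 0, ?_⟩
    rw [add_comm]
    exact sq_norm_add_sq_norm_of_mem_unitaryGroup hSu 1

/-- for real `ξ` the outgoing Jost solutions are linearly
independent and the scattering matrix defined by them is unitary. -/
theorem stmt_5 (n0 : ℕ) (U : ℤ → Matrix (Fin 2) (Fin 2) ℂ)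
    (hU : CoinsUnitary U) (hA1 : A1 n0 U) (hA2 : A2 U) (ξ : ℝ)
    (ψom ψop ψim ψip : ℤ → C2)
    (hom : JostOutMinus U (ξ : ℂ) ψom) (hop : JostOutPlus n0 U (ξ : ℂ) ψop)
    (him : JostInMinus U (ξ : ℂ) ψim) (hip : JostInPlus n0 U (ξ : ℂ) ψip) :
    (∀ a b : ℂ, a • ψom + b • ψop = 0 → a = 0 ∧ b = 0) ∧
    (∃ S : Matrix (Fin 2) (Fin 2) ℂ,
      ∀ n : ℤ, ψip n = S 0 0 • ψom n + S 1 0 • ψop n ∧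
               ψim n = S 0 1 • ψom n + S 1 1 • ψop n) ∧
    ∀ S : Matrix (Fin 2) (Fin 2) ℂ,
      (∀ n : ℤ, ψip n = S 0 0 • ψom n + S 1 0 • ψop n ∧
                ψim n = S 0 1 • ψom n + S 1 1 • ψop n) →
      S ∈ Matrix.unitaryGroup (Fin 2) ℂ ∧
      ‖S 0 0‖ ^ 2 + ‖S 0 1‖ ^ 2 = 1 ∧
      ‖S 1 1‖ ^ 2 + ‖S 1 0‖ ^ 2 = 1 :=
  stmt_5_general n0 U hU hA2 ξ ψom ψop ψim ψip hom hop him hip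
end
end

section
/- Assume (A1) and (A2). There exists a polynomial p ∈ ℂ[z] of degree n₀ such that e^{−i(n₀+1)ξ} 𝕋₂₂(ξ) = e^{−2iξ} p(e^{−2iξ}) for all ξ ∈ ℂ. Consequently, the algebraic multiplicity of each nonzero eigenvalue λ of 𝒦 (the dimension of the generalized eigenspace ker(𝒦 − λI)^{2(n₀+1)}) is at most n₀. -/
open Complex Matrix

noncomputable section

/-!
Conjugating `e^{-iξ} T_n(ξ)` by `diag(1, e^{-iξ})` gives a matrix whose entries are polynomials of
degree at most one in `z = e^{-2iξ}`, with second column divisible by `z`. Hence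
`e^{-i(n₀+1)ξ} 𝕋₂₂(ξ)` is a polynomial in `z` of degree at most `n₀ + 1`, without constant term,
whose coefficient of `z^{n₀+1}` is `∏ 1/d_n`; it is nonzero since `|d_n| = |a_n|` for a unitary
coin.

The diagonal matrix `(-1)^n` anticommutes with `𝒦`, so it maps the generalized eigenspace of `μ`
into that of `-μ`. Two rows of `𝒦` vanish, so its kernel has dimension at least two. For `μ ≠ 0`
the generalized eigenspaces of `μ`, `-μ` and `0` are independent in a space of dimension
`2(n₀ + 1)`, which forces `algMult μ ≤ n₀`.
-/

open Polynomial

theorem List.prod_map_conj {M : Type*} [Monoid M] {s t : M} (hst : s * t = 1) (hts : t * s = 1)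
    (l : List M) : (l.map fun x => s * x * t).prod = s * l.prod * t := by
  induction l with
  | nil => simpa using hst.symm
  | cons x l ih =>
    rw [List.map_cons, List.prod_cons, List.prod_cons, ih]
    simp only [mul_assoc]
    rw [← mul_assoc t s, hts, one_mul]

section MatrixPolynomial

variable {R : Type*} [CommSemiring R] {n : Type*} [Fintype n] [DecidableEq n]

lemma natDegree_matPolyEquiv_le {M : Matrix n n R[X]} {d : ℕ}
    (h : ∀ i j, (M i j).natDegree ≤ d) : (matPolyEquiv M).natDegree ≤ d :=
  natDegree_le_iff_coeff_eq_zero.2 fun k hk => by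
    ext i j
    simp [coeff_eq_zero_of_natDegree_lt ((h i j).trans_lt hk)]

lemma Matrix.natDegree_list_prod_apply_le (l : List (Matrix n n R[X])) {d : ℕ}
    (h : ∀ M ∈ l, ∀ i j, (M i j).natDegree ≤ d) (i j : n) :
    (l.prod i j).natDegree ≤ l.length * d := by
  refine natDegree_le_iff_coeff_eq_zero.2 fun k hk => ?_
  have hprod : (matPolyEquiv l.prod).natDegree ≤ l.length * d := by
    rw [map_list_prod]
    refine (natDegree_list_prod_le _).trans ?_
    have hdeg : ∀ p ∈ (l.map matPolyEquiv).map natDegree, p ≤ d := by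
      simp only [List.map_map, List.mem_map]
      rintro _ ⟨M, hM, rfl⟩
      exact natDegree_matPolyEquiv_le (h M hM)
    simpa using List.sum_le_card_nsmul _ d hdeg
  rw [← matPolyEquiv_coeff_apply, coeff_eq_zero_of_natDegree_lt (hprod.trans_lt hk)]
  rfl

lemma Matrix.coeff_list_prod_apply (l : List (Matrix n n R[X])) {d : ℕ}
    (h : ∀ M ∈ l, ∀ i j, (M i j).natDegree ≤ d) (i j : n) :
    (l.prod i j).coeff (l.length * d) = (l.map fun M => M.map (coeff · d)).prod i j := by
  have hcoeff : (coeff · d) ∘ matPolyEquiv = fun M : Matrix n n R[X] => M.map (coeff · d) := by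
    funext M
    ext a b
    simp
  rw [← matPolyEquiv_coeff_apply, map_list_prod, ← List.length_map (f := matPolyEquiv),
    coeff_list_prod_of_natDegree_le _ _
      (by simpa using fun M hM => natDegree_matPolyEquiv_le (h M hM)),
    List.map_map, hcoeff]

lemma Matrix.eval_list_prod_apply (l : List (Matrix n n R[X])) (z : R) (i j : n) :
    (l.prod i j).eval z = (l.map fun M => M.map (eval z)).prod i j :=
  congrFun₂ (map_list_prod (evalRingHom z).mapMatrix l) i j

end MatrixPolynomial

lemma Matrix.list_prod_apply_one_one {R : Type*} [CommSemiring R]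
    (l : List (Matrix (Fin 2) (Fin 2) R)) (h : ∀ M ∈ l, M 1 0 = 0) :
    l.prod 1 1 = (l.map (· 1 1)).prod := by
  induction l with
  | nil => simp
  | cons M l ih =>
    simp only [List.forall_mem_cons] at h
    simp [Matrix.mul_apply, h.1, ih h.2]

lemma Matrix.norm_apply_zero_zero_eq_of_mem_unitaryGroup {U : Matrix (Fin 2) (Fin 2) ℂ}
    (hU : U ∈ unitaryGroup (Fin 2) ℂ) : ‖U 0 0‖ = ‖U 1 1‖ := by
  have hrow := congrFun₂ (mem_unitaryGroup_iff.mp hU) 0 0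
  have hcol := congrFun₂ (mem_unitaryGroup_iff'.mp hU) 1 1
  simp only [Matrix.mul_apply, Fin.sum_univ_two, star_apply, RCLike.star_def, one_apply_eq,
    mul_conj', conj_mul'] at hrow hcol
  have hsq : ‖U 0 0‖ ^ 2 = ‖U 1 1‖ ^ 2 := by
    exact_mod_cast (by linear_combination hrow - hcol : (‖U 0 0‖ : ℂ) ^ 2 = ‖U 1 1‖ ^ 2)
  exact (sq_eq_sq₀ (norm_nonneg _) (norm_nonneg _)).1 hsq

open Module Module.End

section GenEigenspace

variable {K V : Type*} [Field K] [AddCommGroup V] [Module K V] [FiniteDimensional K V]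

lemma Module.End.finrank_maxGenEigenspace_le_neg {f σ : End K V} (hσ : Function.Injective σ)
    (h : σ * f = -(f * σ)) (μ : K) :
    finrank K (f.maxGenEigenspace μ) ≤ finrank K (f.maxGenEigenspace (-μ)) := by
  have hsemi : SemiconjBy σ (-(f - μ • 1)) (f - (-μ) • 1) := by
    rw [SemiconjBy, mul_neg, mul_sub, h, neg_smul, sub_neg_eq_add, add_mul, mul_smul_comm,
      smul_mul_assoc, mul_one, one_mul]
    abel
  have hmaps : ∀ v ∈ f.maxGenEigenspace μ, σ v ∈ f.maxGenEigenspace (-μ) := by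
    simp only [mem_maxGenEigenspace]
    rintro v ⟨k, hk⟩
    refine ⟨k, ?_⟩
    rw [← Module.End.mul_apply, ← (hsemi.pow_right k).eq, neg_pow, Module.End.mul_apply,
      Module.End.mul_apply, hk, map_zero, map_zero]
  refine LinearMap.finrank_le_finrank_of_injective (f := σ.restrict hmaps) ?_
  rw [LinearMap.injective_restrict_iff, LinearMap.ker_eq_bot.2 hσ]
  exact disjoint_bot_right

lemma Module.End.finrank_maxGenEigenspace_add_add_le (f : End K V) {a b c : K} (hab : a ≠ b)
    (hac : a ≠ c) (hbc : b ≠ c) :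
    finrank K (f.maxGenEigenspace a) + finrank K (f.maxGenEigenspace b) +
      finrank K (f.maxGenEigenspace c) ≤ finrank K V := by
  have hdisj : Disjoint (f.maxGenEigenspace a ⊔ f.maxGenEigenspace b) (f.maxGenEigenspace c) :=
    ((f.independent_maxGenEigenspace c).mono_right
      (sup_le (le_iSup₂ (f := fun μ (_ : μ ≠ c) => f.maxGenEigenspace μ) a hac)
        (le_iSup₂ (f := fun μ (_ : μ ≠ c) => f.maxGenEigenspace μ) b hbc))).symm
  rw [← Submodule.finrank_sup_add_finrank_inf_eq, (f.disjoint_genEigenspace hab ⊤ ⊤).eq_bot,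
    finrank_bot, add_zero]
  exact Submodule.finrank_add_finrank_le_of_disjoint hdisj

end GenEigenspace

lemma Matrix.card_le_finrank_ker_toLin' {K ι κ : Type*} [Field K] [Fintype ι] [DecidableEq ι]
    [Fintype κ] (A : Matrix ι ι K) {e : κ → ι} (he : Function.Injective e)
    (hA : ∀ k j, A (e k) j = 0) :
    Fintype.card κ ≤ Module.finrank K (LinearMap.ker (toLin' A)) := by
  set ℓ := LinearMap.funLeft K K e
  have hrange : LinearMap.range (toLin' A) ≤ LinearMap.ker ℓ := by
    rintro _ ⟨v, rfl⟩
    ext k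
    simp [ℓ, mulVec, dotProduct, hA]
  have hℓ := LinearMap.finrank_range_add_finrank_ker ℓ
  rw [LinearMap.range_eq_top.2 (LinearMap.funLeft_surjective_of_injective K K e he), finrank_top,
    Module.finrank_fintype_fun_eq_card, Module.finrank_fintype_fun_eq_card] at hℓ
  have hA' := LinearMap.finrank_range_add_finrank_ker (toLin' A)
  rw [Module.finrank_fintype_fun_eq_card] at hA'
  have := Submodule.finrank_mono hrange
  omega

-- In `TT`, the ascription `(k : ℤ)` coerces the list `List.range (n0 + 1)` itself to `List ℤ`,
-- through a monadic bind.
lemma TT_eq_prod_map_range (n0 : ℕ) (U : ℤ → Matrix (Fin 2) (Fin 2) ℂ) (ξ : ℂ) :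
    TT n0 U ξ = ((List.range (n0 + 1)).map fun k : ℕ => Tmat U ξ k).prod := by
  simp only [TT, bind_pure_comp, List.map_eq_map, List.map_map]
  rfl

def transferPoly (U : ℤ → Matrix (Fin 2) (Fin 2) ℂ) (k : ℤ) : Matrix (Fin 2) (Fin 2) ℂ[X] :=
  !![C (starRingEnd ℂ (U k 0 0))⁻¹, C (-starRingEnd ℂ (U k 1 0) / starRingEnd ℂ (U k 0 0)) * X;
    C (-U k 1 0 / U k 1 1), C (U k 1 1)⁻¹ * X]

lemma exp_smul_Tmat (U : ℤ → Matrix (Fin 2) (Fin 2) ℂ) (ξ : ℂ) (k : ℤ) :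
    exp (-(I * ξ)) • Tmat U ξ k =
      diagonal ![1, exp (-(I * ξ))] * (transferPoly U k).map (eval (exp (-(2 * I * ξ)))) *
        diagonal ![1, exp (I * ξ)] := by
  have hinv : exp (-(I * ξ)) * exp (I * ξ) = 1 := by rw [← Complex.exp_add]; simp
  have hsq : exp (-(2 * I * ξ)) = exp (-(I * ξ)) * exp (-(I * ξ)) := by
    rw [← Complex.exp_add]; ring_nf
  ext i j
  fin_cases i <;> fin_cases j <;>
    simp only [Tmat, transferPoly, hsq, Fin.isValue, Fin.zero_eta, Fin.mk_one, Matrix.smul_apply,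
      of_apply, cons_val', cons_val_zero, cons_val_one, cons_val_fin_one, smul_eq_mul,
      mul_diagonal, diagonal_mul, map_apply, eval_mul, eval_C, eval_X, one_mul, mul_one] <;>
    grind

lemma exp_mul_TT_apply_one_one (n0 : ℕ) (U : ℤ → Matrix (Fin 2) (Fin 2) ℂ) (ξ : ℂ) :
    exp (-(I * ((n0 : ℂ) + 1) * ξ)) * TT n0 U ξ 1 1 =
      (((List.range (n0 + 1)).map fun k : ℕ => transferPoly U k).prod 1 1).eval
        (exp (-(2 * I * ξ))) := by
  set w := exp (-(I * ξ))
  set w' := exp (I * ξ)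
  have hinv : w * w' = 1 := by rw [← Complex.exp_add]; simp
  have hSS' : diagonal ![1, w] * diagonal ![1, w'] = 1 := by
    rw [diagonal_mul_diagonal, ← diagonal_one]
    congr 1
    ext i
    fin_cases i <;> simp [hinv]
  have hS'S : diagonal ![1, w'] * diagonal ![1, w] = 1 := by
    rw [diagonal_mul_diagonal, ← diagonal_one]
    congr 1
    ext i
    fin_cases i <;> simp [mul_comm w', hinv]
  have hpow : exp (-(I * ((n0 : ℂ) + 1) * ξ)) =
      w ^ ((List.range (n0 + 1)).map fun k : ℕ => Tmat U ξ k).length := by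
    rw [List.length_map, List.length_range, ← Complex.exp_nat_mul]; push_cast; ring_nf
  have hmat : exp (-(I * ((n0 : ℂ) + 1) * ξ)) • TT n0 U ξ =
      diagonal ![1, w] * ((List.range (n0 + 1)).map fun k : ℕ =>
        (transferPoly U k).map (eval (exp (-(2 * I * ξ))))).prod * diagonal ![1, w'] := by
    rw [TT_eq_prod_map_range, hpow, List.smul_prod, List.map_map, ← List.prod_map_conj hSS' hS'S,
      List.map_map]
    simp only [Function.comp_def, exp_smul_Tmat, w, w']
  rw [← smul_eq_mul, ← Matrix.smul_apply, hmat, mul_diagonal, diagonal_mul, eval_list_prod_apply,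
    List.map_map]
  simp only [cons_val_one, cons_val_fin_one]
  rw [mul_right_comm, hinv, one_mul]
  rfl

lemma natDegree_transferPoly_apply_le (U : ℤ → Matrix (Fin 2) (Fin 2) ℂ) (k : ℤ) (i j : Fin 2) :
    (transferPoly U k i j).natDegree ≤ 1 := by
  have hCX (c : ℂ) : (C c * X).natDegree ≤ 1 := (natDegree_C_mul_le _ _).trans natDegree_X_le
  fin_cases i <;> fin_cases j <;> simp [transferPoly, hCX]

lemma exists_degree_eq_and_exp_mul_TT_eq (n0 : ℕ) (U : ℤ → Matrix (Fin 2) (Fin 2) ℂ)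
    (hd : ∀ k ≤ n0, U k 1 1 ≠ 0) :
    ∃ p : ℂ[X], p.degree = n0 ∧ ∀ ξ : ℂ, exp (-(I * ((n0 : ℂ) + 1) * ξ)) * TT n0 U ξ 1 1 =
      exp (-(2 * I * ξ)) * p.eval (exp (-(2 * I * ξ))) := by
  set l := (List.range (n0 + 1)).map fun k : ℕ => transferPoly U k
  have hl : ∀ M ∈ l, ∀ i j, (M i j).natDegree ≤ 1 := by
    simp only [l, List.forall_mem_map]
    exact fun k _ => natDegree_transferPoly_apply_le U k
  have hdeg : (l.prod 1 1).natDegree ≤ n0 + 1 := by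
    simpa [l] using natDegree_list_prod_apply_le l hl 1 1
  have htop : (l.prod 1 1).coeff (n0 + 1) ≠ 0 := by
    have hcoeff := coeff_list_prod_apply l hl 1 1
    rw [List.length_map, List.length_range, mul_one] at hcoeff
    rw [hcoeff, list_prod_apply_one_one _ (by simp [l, transferPoly])]
    refine List.prod_ne_zero ?_
    simpa [l, transferPoly, Nat.lt_succ_iff] using hd
  have hbot : (l.prod 1 1).coeff 0 = 0 := by
    rw [coeff_zero_eq_eval_zero, eval_list_prod_apply]
    simp [l, List.range_succ, Matrix.mul_apply, transferPoly]
  refine ⟨(l.prod 1 1).divX, degree_eq_of_le_of_coeff_ne_zero ?_ (by rwa [coeff_divX]),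
    fun ξ => ?_⟩
  · exact degree_le_of_natDegree_le (by rw [natDegree_divX_eq_natDegree_tsub_one]; omega)
  · rw [exp_mul_TT_apply_one_one]
    conv_lhs => rw [← X_mul_divX_add (l.prod 1 1)]
    simp [hbot]

lemma algMult_eq_finrank_maxGenEigenspace (n0 : ℕ) (U : ℤ → Matrix (Fin 2) (Fin 2) ℂ) (μ : ℂ) :
    algMult n0 U μ = finrank ℂ (maxGenEigenspace (toLinAlgEquiv' (Kmat n0 U)) μ) := by
  have hdim : finrank ℂ (Fin (n0 + 1) × Fin 2 → ℂ) = 2 * (n0 + 1) := by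
    simp [mul_comm]
  have hpow : toLinAlgEquiv' ((Kmat n0 U - μ • 1) ^ (2 * (n0 + 1))) =
      (toLinAlgEquiv' (Kmat n0 U) - μ • 1) ^ (2 * (n0 + 1)) := by
    simp
  rw [maxGenEigenspace_eq_genEigenspace_finrank, hdim, genEigenspace_nat, ← hpow]
  rfl

def siteSign (n0 : ℕ) : Matrix (Fin (n0 + 1) × Fin 2) (Fin (n0 + 1) × Fin 2) ℂ :=
  diagonal fun p => (-1) ^ (p.1 : ℕ)

lemma siteSign_mul_self (n0 : ℕ) : siteSign n0 * siteSign n0 = 1 := by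
  simp [siteSign, ← pow_add, ← two_mul, pow_mul]

lemma siteSign_mul_Kmat (n0 : ℕ) (U : ℤ → Matrix (Fin 2) (Fin 2) ℂ) :
    siteSign n0 * Kmat n0 U = -(Kmat n0 U * siteSign n0) := by
  ext p q
  rw [siteSign, diagonal_mul, neg_apply, mul_diagonal]
  by_cases hpq : (q.1 : ℕ) = p.1 + 1 ∨ (q.1 : ℕ) + 1 = p.1
  · rcases hpq with h | h
    · rw [h, pow_succ]; ring
    · rw [← h, pow_succ]; ring
  · rw [not_or] at hpq
    simp [Kmat, hpq.1, hpq.2]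

lemma Kmat_apply_last_zero (n0 : ℕ) (U : ℤ → Matrix (Fin 2) (Fin 2) ℂ)
    (q : Fin (n0 + 1) × Fin 2) :
    Kmat n0 U (Fin.last n0, 0) q = 0 := by
  simp only [Kmat, of_apply, Fin.val_last, true_and, zero_ne_one, false_and, ↓reduceIte,
    add_zero, ite_eq_right_iff]
  omega

lemma Kmat_apply_zero_one (n0 : ℕ) (U : ℤ → Matrix (Fin 2) (Fin 2) ℂ)
    (q : Fin (n0 + 1) × Fin 2) :
    Kmat n0 U (0, 1) q = 0 := by
  simp [Kmat]

lemma algMult_le (n0 : ℕ) (U : ℤ → Matrix (Fin 2) (Fin 2) ℂ) {μ : ℂ} (hμ : μ ≠ 0) :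
    algMult n0 U μ ≤ n0 := by
  rw [algMult_eq_finrank_maxGenEigenspace]
  set f := toLinAlgEquiv' (Kmat n0 U)
  set σ := toLinAlgEquiv' (siteSign n0)
  have hσ : Function.Injective σ := by
    refine Function.LeftInverse.injective (g := σ) fun v => ?_
    rw [← Module.End.mul_apply, ← map_mul, siteSign_mul_self, map_one, Module.End.one_apply]
  have hanti : σ * f = -(f * σ) := by
    rw [← map_mul, ← map_mul, ← map_neg, siteSign_mul_Kmat]
  have hrows : Function.Injective ![((Fin.last n0, 0) : Fin (n0 + 1) × Fin 2), (0, 1)] := by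
    intro i j h
    fin_cases i <;> fin_cases j <;> simp_all
  have hker := (Kmat n0 U).card_le_finrank_ker_toLin' hrows fun k j => by
    fin_cases k
    exacts [Kmat_apply_last_zero n0 U j, Kmat_apply_zero_one n0 U j]
  have hzero : 2 ≤ finrank ℂ (maxGenEigenspace f 0) := by
    refine (Fintype.card_fin 2 ▸ hker).trans (Submodule.finrank_mono ?_)
    rw [← eigenspace_zero]
    exact eigenspace_le_maxGenEigenspace
  have hneg := finrank_maxGenEigenspace_le_neg hσ hanti μ
  have htot := finrank_maxGenEigenspace_add_add_le f (self_ne_neg.mpr hμ) hμ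
    (neg_ne_zero.mpr hμ)
  rw [finrank_fintype_fun_eq_card, Fintype.card_prod, Fintype.card_fin, Fintype.card_fin] at htot
  omega

theorem stmt_9_general (n0 : ℕ) (U : ℤ → Matrix (Fin 2) (Fin 2) ℂ)
    (hU : CoinsUnitary U) (hA2 : A2 U) :
    (∃ p : Polynomial ℂ, p.degree = (n0 : ℕ) ∧
      ∀ ξ : ℂ, Complex.exp (-(Complex.I * ((n0 : ℂ) + 1) * ξ)) * TT n0 U ξ 1 1 =
        Complex.exp (-(2 * Complex.I * ξ)) *
          p.eval (Complex.exp (-(2 * Complex.I * ξ)))) ∧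
    ∀ μ : ℂ, μ ≠ 0 → HasEig n0 U μ → algMult n0 U μ ≤ n0 := by
  refine ⟨exists_degree_eq_and_exp_mul_TT_eq n0 U fun k _ => ?_, fun μ hμ _ => algMult_le n0 U hμ⟩
  rw [← norm_ne_zero_iff, ← Matrix.norm_apply_zero_zero_eq_of_mem_unitaryGroup (hU k),
    norm_ne_zero_iff]
  exact hA2 k

/-- `e^{-i(n₀+1)ξ}𝕋₂₂(ξ) = e^{-2iξ}p(e^{-2iξ})` for a polynomial `p`
of degree `n₀`; the algebraic multiplicity of each resonance is at most `n₀`. -/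
theorem stmt_9 (n0 : ℕ) (U : ℤ → Matrix (Fin 2) (Fin 2) ℂ)
    (hU : CoinsUnitary U) (hA1 : A1 n0 U) (hA2 : A2 U) :
    (∃ p : Polynomial ℂ, p.degree = (n0 : ℕ) ∧
      ∀ ξ : ℂ, Complex.exp (-(Complex.I * ((n0 : ℂ) + 1) * ξ)) * TT n0 U ξ 1 1 =
        Complex.exp (-(2 * Complex.I * ξ)) *
          p.eval (Complex.exp (-(2 * Complex.I * ξ)))) ∧
    ∀ μ : ℂ, μ ≠ 0 → HasEig n0 U μ → algMult n0 U μ ≤ n0 :=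
  stmt_9_general n0 U hU hA2
end
end
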